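/- Let H be a complex separable infinite-dimensional Hilbert space and T a bounded linear operator on H. If T is Cesàro-hypercyclic, then the Weyl spectrum and the essential approximate point spectrum of T coincide: σ_w(T) = σ_ea(T). -/

import Mathlib

/-!
If `T - λ` did not have dense range, Hahn–Banach would give a functional `φ ≠ 0` with
`φ ∘ T = λ φ`. Being surjective, `φ` maps the dense Cesàro orbit `{n⁻¹ Tⁿ x}` onto a dense subset of
`ℂ`, namely `{n⁻¹ λⁿ φ x}`; but that set is bounded when `‖λ‖ ≤ 1` and, by Bernoulli's inequality,
bounded away from `0` when `‖λ‖ > 1` and `φ x ≠ 0`. So every `T - λ` has dense range, and an upper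
semi-Fredholm `T - λ` is then onto; index `≤ 0` forces its kernel to vanish, so it is Weyl.
-/

open Filter Topology

noncomputable section

variable {E : Type*} [NormedAddCommGroup E] [NormedSpace ℂ E]

/-- `T` is Cesàro-hypercyclic: some orbit `{n⁻¹ Tⁿ x : n ≥ 1}` is dense. -/
def CesaroHypercyclic (T : E →L[ℂ] E) : Prop :=
  ∃ x : E, Dense {y : E | ∃ n : ℕ, 1 ≤ n ∧ y = ((n : ℂ))⁻¹ • (T ^ n) x}

/-- `S` is upper semi-Fredholm: closed range and finite-dimensional kernel. -/
def IsUpperSemiFredholm (S : E →L[ℂ] E) : Prop :=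
  IsClosed (LinearMap.range (S : E →ₗ[ℂ] E) : Set E) ∧ FiniteDimensional ℂ (LinearMap.ker (S : E →ₗ[ℂ] E))

/-- `S` is lower semi-Fredholm: closed range of finite codimension. -/
def IsLowerSemiFredholm (S : E →L[ℂ] E) : Prop :=
  IsClosed (LinearMap.range (S : E →ₗ[ℂ] E) : Set E) ∧ FiniteDimensional ℂ (E ⧸ LinearMap.range (S : E →ₗ[ℂ] E))

/-- `S` is semi-Fredholm. -/
def IsSemiFredholm (S : E →L[ℂ] E) : Prop :=
  IsUpperSemiFredholm S ∨ IsLowerSemiFredholm S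

/-- `S` is Fredholm. -/
def IsFredholm (S : E →L[ℂ] E) : Prop :=
  IsUpperSemiFredholm S ∧ IsLowerSemiFredholm S

/-- The index of a semi-Fredholm operator `S` is `≤ 0`:
`dim ker S ≤ codim ran S` (as cardinals, so that an infinite codimension is allowed). -/
def IndexLE0 (S : E →L[ℂ] E) : Prop :=
  Module.rank ℂ (LinearMap.ker (S : E →ₗ[ℂ] E)) ≤ Module.rank ℂ (E ⧸ LinearMap.range (S : E →ₗ[ℂ] E))

/-- The index of a semi-Fredholm operator `S` is `≥ 0`:
`codim ran S ≤ dim ker S` (as cardinals, so that an infinite kernel is allowed). -/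
def IndexGE0 (S : E →L[ℂ] E) : Prop :=
  Module.rank ℂ (E ⧸ LinearMap.range (S : E →ₗ[ℂ] E)) ≤ Module.rank ℂ (LinearMap.ker (S : E →ₗ[ℂ] E))

/-- `S` is Weyl: Fredholm of index zero. -/
def IsWeyl (S : E →L[ℂ] E) : Prop :=
  IsFredholm S ∧ Module.rank ℂ (LinearMap.ker (S : E →ₗ[ℂ] E)) = Module.rank ℂ (E ⧸ LinearMap.range (S : E →ₗ[ℂ] E))

/-- `S` has finite ascent: the kernels of its powers stabilize. -/
def HasFiniteAscent (S : E →L[ℂ] E) : Prop :=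
  ∃ n : ℕ, LinearMap.ker ((S ^ n : E →L[ℂ] E) : E →ₗ[ℂ] E) = LinearMap.ker ((S ^ (n + 1) : E →L[ℂ] E) : E →ₗ[ℂ] E)

/-- `S` has finite descent: the ranges of its powers stabilize. -/
def HasFiniteDescent (S : E →L[ℂ] E) : Prop :=
  ∃ n : ℕ, LinearMap.range ((S ^ n : E →L[ℂ] E) : E →ₗ[ℂ] E) = LinearMap.range ((S ^ (n + 1) : E →L[ℂ] E) : E →ₗ[ℂ] E)

/-- `S` is Browder: Fredholm with finite ascent and finite descent. -/
def IsBrowder (S : E →L[ℂ] E) : Prop :=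
  IsFredholm S ∧ HasFiniteAscent S ∧ HasFiniteDescent S

/-- `S` is bounded below. -/
def IsBoundedBelow (S : E →L[ℂ] E) : Prop :=
  ∃ c > (0 : ℝ), ∀ x : E, c * ‖x‖ ≤ ‖S x‖

/-- The Weyl spectrum `σ_w(T)`. -/
def weylSpectrum (T : E →L[ℂ] E) : Set ℂ :=
  {lam : ℂ | ¬ IsWeyl (T - lam • 1)}

/-- The Browder spectrum `σ_b(T)`. -/
def browderSpectrum (T : E →L[ℂ] E) : Set ℂ :=
  {lam : ℂ | ¬ IsBrowder (T - lam • 1)}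

/-- The approximate point spectrum `σ_a(T)`. -/
def approxSpectrum (T : E →L[ℂ] E) : Set ℂ :=
  {lam : ℂ | ¬ IsBoundedBelow (T - lam • 1)}

/-- The essential approximate point spectrum `σ_ea(T)`. -/
def essApproxSpectrum (T : E →L[ℂ] E) : Set ℂ :=
  {lam : ℂ | ¬ (IsUpperSemiFredholm (T - lam • 1) ∧ IndexLE0 (T - lam • 1))}

/-- The Browder essential approximate point spectrum `σ_ab(T)`. -/
def browderEssApproxSpectrum (T : E →L[ℂ] E) : Set ℂ :=
  {lam : ℂ | ¬ (IsUpperSemiFredholm (T - lam • 1) ∧ IndexLE0 (T - lam • 1) ∧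
    HasFiniteAscent (T - lam • 1))}

/-- `lam` is an isolated point of the set `s`. -/
def IsIsolatedPointOf (s : Set ℂ) (lam : ℂ) : Prop :=
  lam ∈ s ∧ ∃ ε > (0 : ℝ), ∀ mu ∈ s, ‖mu - lam‖ < ε → mu = lam

/-- `π₀₀(T)`: isolated points of the spectrum which are eigenvalues of finite multiplicity. -/
def pi00 (T : E →L[ℂ] E) : Set ℂ :=
  {lam : ℂ | IsIsolatedPointOf (spectrum ℂ T) lam ∧
    LinearMap.ker ((T - lam • 1 : E →L[ℂ] E) : E →ₗ[ℂ] E) ≠ ⊥ ∧ FiniteDimensional ℂ (LinearMap.ker ((T - lam • 1 : E →L[ℂ] E) : E →ₗ[ℂ] E))}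

/-- `π₀₀ᵃ(T)`: isolated points of the approximate point spectrum which are eigenvalues of
finite multiplicity. -/
def pi00a (T : E →L[ℂ] E) : Set ℂ :=
  {lam : ℂ | IsIsolatedPointOf (approxSpectrum T) lam ∧
    LinearMap.ker ((T - lam • 1 : E →L[ℂ] E) : E →ₗ[ℂ] E) ≠ ⊥ ∧ FiniteDimensional ℂ (LinearMap.ker ((T - lam • 1 : E →L[ℂ] E) : E →ₗ[ℂ] E))}

/-- Weyl's theorem holds for `T`: `σ(T) \ σ_w(T) = π₀₀(T)`. -/
def WeylsTheorem (T : E →L[ℂ] E) : Prop :=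
  spectrum ℂ T \ weylSpectrum T = pi00 T

/-- a-Weyl's theorem holds for `T`: `σ_a(T) \ σ_ea(T) = π₀₀ᵃ(T)`. -/
def AWeylsTheorem (T : E →L[ℂ] E) : Prop :=
  approxSpectrum T \ essApproxSpectrum T = pi00a T

/-- a-Browder's theorem holds for `T`: `σ_ea(T) = σ_ab(T)`. -/
def ABrowdersTheorem (T : E →L[ℂ] E) : Prop :=
  essApproxSpectrum T = browderEssApproxSpectrum T

/-- The unit circle `∂D = {z : ‖z‖ = 1}`. -/
def unitCircleSet : Set ℂ := {z : ℂ | ‖z‖ = 1}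

/-- Restriction of a continuous linear map to an invariant submodule. -/
def clmRestrict (S : E →L[ℂ] E) (M : Submodule ℂ E) (h : ∀ x ∈ M, S x ∈ M) : M →L[ℂ] M :=
  ⟨(S : E →ₗ[ℂ] E).restrict h,
    Continuous.subtype_mk (S.continuous.comp continuous_subtype_val) _⟩

/-- `S` is generalized upper semi-Fredholm: `E = M ⊕ N` for closed `S`-invariant
subspaces `M`, `N` with `S|_M` upper semi-Fredholm of index `≤ 0` and `S|_N`
quasinilpotent. -/
def IsGeneralizedUpperSemiFredholm (S : E →L[ℂ] E) : Prop :=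
  ∃ (M N : Submodule ℂ E), IsClosed (M : Set E) ∧ IsClosed (N : Set E) ∧ IsCompl M N ∧
    ∃ (hM : ∀ x ∈ M, S x ∈ M) (hN : ∀ x ∈ N, S x ∈ N),
      IsUpperSemiFredholm (clmRestrict S M hM) ∧ IndexLE0 (clmRestrict S M hM) ∧
      spectrum ℂ (clmRestrict S N hN) = {0}

/-- `σ₁(T)`: the complement of the set of `lam` around which `T - mu` is generalized
upper semi-Fredholm for all `mu ≠ lam` close enough to `lam`. -/
def sigma1 (T : E →L[ℂ] E) : Set ℂ :=
  {lam : ℂ | ¬ ∃ ε > (0 : ℝ), ∀ mu : ℂ, 0 < ‖mu - lam‖ → ‖mu - lam‖ < ε →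
    IsGeneralizedUpperSemiFredholm (T - mu • 1)}

end

theorem Submodule.exists_dual_ne_zero_of_not_dense {𝕜 F : Type*} [RCLike 𝕜] [NormedAddCommGroup F]
    [NormedSpace 𝕜 F] (p : Submodule 𝕜 F) (hp : ¬ Dense (p : Set F)) :
    ∃ φ : StrongDual 𝕜 F, φ ≠ 0 ∧ ∀ y ∈ p, φ y = 0 := by
  set q := p.topologicalClosure
  -- makes `F ⧸ q` a normed space, which has a separating dual
  have : IsClosed (q : Set F) := p.isClosed_topologicalClosure
  obtain ⟨x, hx⟩ : ∃ x, x ∉ q := by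
    by_contra! h
    exact hp (Submodule.dense_iff_topologicalClosure_eq_top.2 (eq_top_iff.2 fun x _ => h x))
  obtain ⟨g, hg⟩ :=
    SeparatingDual.exists_ne_zero (R := 𝕜) ((Submodule.Quotient.mk_eq_zero q).not.2 hx)
  refine ⟨g.comp q.mkQL, fun h => hg (by simpa using congr($h x)), fun y hy => ?_⟩
  simp [(Submodule.Quotient.mk_eq_zero q).2 (p.le_topologicalClosure hy)]

theorem not_dense_setOf_inv_natCast_mul_pow_mul (lam c : ℂ) :
    ¬ Dense {z : ℂ | ∃ n : ℕ, 1 ≤ n ∧ z = (n : ℂ)⁻¹ * lam ^ n * c} := by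
  set S := {z : ℂ | ∃ n : ℕ, 1 ≤ n ∧ z = (n : ℂ)⁻¹ * lam ^ n * c}
  intro hS
  have mem_of_isClosed_of_subset : ∀ t : Set ℂ, IsClosed t → S ⊆ t → ∀ z, z ∈ t := fun t ht hSt z =>
    (hS.closure_eq ▸ ht.closure_subset_iff.2 hSt) (Set.mem_univ z)
  by_cases hbdd : ‖lam‖ ≤ 1 ∨ c = 0
  · have hsub : S ⊆ Metric.closedBall 0 ‖c‖ := by
      rintro _ ⟨n, hn, rfl⟩
      rw [mem_closedBall_zero_iff, norm_mul, norm_mul, norm_pow, norm_inv, Complex.norm_natCast]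
      rcases hbdd with hl | rfl
      · have : (n : ℝ)⁻¹ * ‖lam‖ ^ n ≤ 1 :=
          mul_le_one₀ (inv_le_one_of_one_le₀ (by exact_mod_cast hn)) (by positivity)
            (pow_le_one₀ (norm_nonneg _) hl)
        nlinarith [norm_nonneg c]
      · simp
    have := mem_of_isClosed_of_subset _ Metric.isClosed_closedBall hsub ((‖c‖ + 1 : ℝ) : ℂ)
    rw [mem_closedBall_zero_iff, Complex.norm_real, Real.norm_of_nonneg (by positivity)] at this
    linarith
  · push Not at hbdd
    obtain ⟨hl, hc⟩ := hbdd
    have hm : 0 < (‖lam‖ - 1) * ‖c‖ := mul_pos (by linarith) (norm_pos_iff.2 hc)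
    have hsub : S ⊆ (Metric.ball 0 ((‖lam‖ - 1) * ‖c‖))ᶜ := by
      rintro _ ⟨n, hn, rfl⟩
      rw [Set.mem_compl_iff, mem_ball_zero_iff, not_lt, norm_mul, norm_mul, norm_pow, norm_inv,
        Complex.norm_natCast]
      have hn0 : (0 : ℝ) < n := by exact_mod_cast hn
      have bernoulli := one_add_mul_le_pow (a := ‖lam‖ - 1) (by linarith) n
      rw [add_sub_cancel] at bernoulli
      have : ‖lam‖ - 1 ≤ (n : ℝ)⁻¹ * ‖lam‖ ^ n := by
        rw [inv_mul_eq_div, le_div_iff₀ hn0]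
        nlinarith
      gcongr
    have := mem_of_isClosed_of_subset _ Metric.isOpen_ball.isClosed_compl hsub 0
    simp [hm] at this

section

variable {E : Type*} [NormedAddCommGroup E] [NormedSpace ℂ E]

theorem CesaroHypercyclic.dense_range_sub_smul_one {T : E →L[ℂ] E} (hT : CesaroHypercyclic T)
    (lam : ℂ) : Dense (LinearMap.range ((T - lam • 1 : E →L[ℂ] E) : E →ₗ[ℂ] E) : Set E) := by
  by_contra hd
  obtain ⟨φ, hφ, hφ_range⟩ := Submodule.exists_dual_ne_zero_of_not_dense _ hd
  have hφT : ∀ y, φ (T y) = lam * φ y := fun y => by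
    simpa [sub_eq_zero] using hφ_range _ (LinearMap.mem_range_self _ y)
  have hφTpow : ∀ n y, φ ((T ^ n) y) = lam ^ n * φ y := by
    intro n
    induction n with
    | zero => simp
    | succ n ih =>
      intro y
      rw [pow_succ']
      change φ (T ((T ^ n) y)) = _
      rw [hφT, ih, pow_succ', mul_assoc]
  obtain ⟨x, hx⟩ := hT
  have hsurj : Function.Surjective φ :=
    LinearMap.surjective_of_ne_zero (f := (φ : E →ₗ[ℂ] ℂ)) (by exact_mod_cast hφ)
  refine not_dense_setOf_inv_natCast_mul_pow_mul lam (φ x)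
    ((hsurj.denseRange.dense_image φ.continuous hx).mono ?_)
  rintro _ ⟨_, ⟨n, hn, rfl⟩, rfl⟩
  exact ⟨n, hn, by rw [map_smul, hφTpow, smul_eq_mul, mul_assoc]⟩

theorem IsUpperSemiFredholm.isWeyl_of_dense_range {S : E →L[ℂ] E} (hS : IsUpperSemiFredholm S)
    (hind : IndexLE0 S) (hd : Dense (LinearMap.range (S : E →ₗ[ℂ] E) : Set E)) : IsWeyl S := by
  have hrange : LinearMap.range (S : E →ₗ[ℂ] E) = ⊤ :=
    SetLike.coe_injective (by rw [Submodule.top_coe, ← hS.1.closure_eq, hd.closure_eq])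
  have hcodim : Module.rank ℂ (E ⧸ LinearMap.range (S : E →ₗ[ℂ] E)) = 0 := by
    rw [hrange]; exact rank_subsingleton' _ _
  have hker : Module.rank ℂ (LinearMap.ker (S : E →ₗ[ℂ] E)) = 0 :=
    le_antisymm (hcodim ▸ hind) zero_le
  exact ⟨⟨hS, hS.1, FiniteDimensional.of_rank_eq_zero hcodim⟩, hker.trans hcodim.symm⟩

end

variable {H : Type*} [NormedAddCommGroup H] [InnerProductSpace ℂ H] [CompleteSpace H]
  [TopologicalSpace.SeparableSpace H]

theorem cesaroHypercyclic_weylSpectrum_eq_essApproxSpectrum_general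
    (T : H →L[ℂ] H) (hT : CesaroHypercyclic T) :
    weylSpectrum T = essApproxSpectrum T := by
  ext lam
  simp only [weylSpectrum, essApproxSpectrum, Set.mem_ofPred_eq, not_iff_not]
  exact ⟨fun h => ⟨h.1.1, h.2.le⟩,
    fun h => IsUpperSemiFredholm.isWeyl_of_dense_range h.1 h.2 (hT.dense_range_sub_smul_one lam)⟩

theorem cesaroHypercyclic_weylSpectrum_eq_essApproxSpectrum
    (hinf : ¬ FiniteDimensional ℂ H) (T : H →L[ℂ] H) (hT : CesaroHypercyclic T) :
    weylSpectrum T = essApproxSpectrum T :=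
  cesaroHypercyclic_weylSpectrum_eq_essApproxSpectrum_general T hT
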